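/- Let d ≥ 1 and let α : ℝ^d × ℝ^d → ℝ^d be continuous and satisfy the cocycle identity α(x, v+w) = α(x,v) + α(x+v, w). Let A : ℝ^d → ℝ^d be an ℝ-linear map, and let ε > 0 and r > 0 be such that ‖r^{−d} ∫_{C_r} α(x+s, v) ds − A(v)‖ ≤ ε for all x ∈ ℝ^d and all v with ‖v‖ ≤ 2. Then for all x ∈ ℝ^d and all v ∈ ℝ^d, ‖r^{−d} ∫_{C_r} α(x+s, v) ds − A(v)‖ ≤ ε·max(‖v‖, 1). -/

import Mathlib

/-!
Write `v = n • u` with `n = ⌈‖v‖ / 2⌉₊`, so that `‖u‖ ≤ 2`. The cocycle identity telescopes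
`α x (n • u)` into `n` increments `α (x + k • u) u`; the cube averages and the linear map `A` are
additive in the same way, so the error for `v` is a sum of `n` errors for `u`, each at most `ε`,
and `n ≤ max ‖v‖ 1`.
-/

open MeasureTheory

/-- `Euc d` is `d`-dimensional Euclidean space. -/
abbrev Euc (d : ℕ) := EuclideanSpace ℝ (Fin d)

/-- The cube `[-r/2, r/2]^d` in `ℝ^d`. -/
def cube (d : ℕ) (r : ℝ) : Set (Euc d) :=
  {s | ∀ i, s i ∈ Set.Icc (-(r / 2)) (r / 2)}

def IsCocycle {G M : Type*} [Add G] [Add M] (β : G → G → M) : Prop :=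
  ∀ x v w, β x (v + w) = β x v + β (x + v) w

namespace IsCocycle

section Algebra

variable {G M : Type*} [AddCommMonoid G] [AddCommGroup M] {β : G → G → M}

theorem apply_zero (hβ : IsCocycle β) (x : G) : β x 0 = 0 := by
  simpa using hβ x 0 0

theorem nsmul_eq_sum (hβ : IsCocycle β) (x u : G) (n : ℕ) :
    β x (n • u) = ∑ k ∈ Finset.range n, β (x + k • u) u := by
  induction n with
  | zero => simp [hβ.apply_zero]
  | succ n ih => rw [succ_nsmul, hβ, ih, Finset.sum_range_succ]

theorem sub_map {F : Type*} [FunLike F G M] [AddHomClass F G M] (hβ : IsCocycle β) (f : F) :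
    IsCocycle fun x v => β x v - f v := by
  intro x v w
  dsimp only
  rw [hβ, map_add]
  abel

end Algebra

theorem const_smul {G M R : Type*} [Add G] [AddZeroClass M] [DistribSMul R M]
    {β : G → G → M} (hβ : IsCocycle β) (c : R) : IsCocycle fun x v => c • β x v := by
  intro x v w
  dsimp only
  rw [hβ, smul_add]

theorem setIntegral_add_left {E F : Type*} [AddCommMonoid E] [MeasurableSpace E]
    [NormedAddCommGroup F] [NormedSpace ℝ F] {μ : Measure E} {K : Set E} {α : E → E → F}
    (hα : IsCocycle α) (hint : ∀ y v, IntegrableOn (fun s => α (y + s) v) K μ) :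
    IsCocycle fun x v => ∫ s in K, α (x + s) v ∂μ := by
  intro x v w
  simp_rw [hα _ v w, add_right_comm x _ v]
  exact integral_add (hint x v) (hint (x + v) w)

section Norm

variable {E M : Type*} [SeminormedAddCommGroup M] {β : E → E → M}

theorem norm_nsmul_le [AddCommMonoid E] (hβ : IsCocycle β) {u : E} {ε : ℝ}
    (hu : ∀ y, ‖β y u‖ ≤ ε) (x : E) (n : ℕ) : ‖β x (n • u)‖ ≤ n * ε := by
  rw [hβ.nsmul_eq_sum]
  calc ‖∑ k ∈ Finset.range n, β (x + k • u) u‖ ≤ ∑ _k ∈ Finset.range n, ε :=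
        norm_sum_le_of_le _ fun k _ => hu _
    _ = n * ε := by simp

theorem norm_le_ceil_mul [NormedAddCommGroup E] [NormedSpace ℝ E] (hβ : IsCocycle β)
    {R ε : ℝ} (hR : 0 < R) (hsmall : ∀ x v, ‖v‖ ≤ R → ‖β x v‖ ≤ ε) (x v : E) :
    ‖β x v‖ ≤ ⌈‖v‖ / R⌉₊ * ε := by
  set n := ⌈‖v‖ / R⌉₊ with hn
  rcases Nat.eq_zero_or_pos n with hn0 | hnpos
  · have hv : v = 0 := by
      rw [hn, Nat.ceil_eq_zero, div_le_iff₀ hR, zero_mul] at hn0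
      exact norm_le_zero_iff.mp hn0
    simp [hv, hβ.apply_zero, hn0]
  · have hn' : (0 : ℝ) < n := Nat.cast_pos.mpr hnpos
    have hu : ‖(n : ℝ)⁻¹ • v‖ ≤ R := by
      rw [norm_smul, norm_inv, Real.norm_natCast, inv_mul_le_iff₀ hn', ← div_le_iff₀ hR]
      exact Nat.le_ceil _
    have hv : v = n • ((n : ℝ)⁻¹ • v) := by
      rw [← Nat.cast_smul_eq_nsmul ℝ, smul_inv_smul₀ hn'.ne']
    calc ‖β x v‖ = ‖β x (n • ((n : ℝ)⁻¹ • v))‖ := by rw [← hv]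
      _ ≤ n * ε := hβ.norm_nsmul_le (fun y => hsmall y _ hu) x n

end Norm

end IsCocycle

theorem Nat.ceil_half_le_max_one {a : ℝ} (ha : 0 ≤ a) : (⌈a / 2⌉₊ : ℝ) ≤ max a 1 := by
  rcases le_or_gt a 2 with h2 | h2
  · have : ⌈a / 2⌉₊ ≤ 1 := Nat.ceil_le.mpr (by rw [Nat.cast_one]; linarith)
    exact le_max_of_le_right (by exact_mod_cast this)
  · have := Nat.ceil_lt_add_one (div_nonneg ha zero_le_two)
    exact le_max_of_le_left (by linarith)

theorem isCompact_cube (d : ℕ) (r : ℝ) : IsCompact (cube d r) := by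
  have h : cube d r = (EuclideanSpace.equiv (Fin d) ℝ) ⁻¹'
      Set.univ.pi fun _ => Set.Icc (-(r / 2)) (r / 2) := by
    ext s
    exact ⟨fun h i _ => h i, fun h i => h i (Set.mem_univ i)⟩
  rw [h]
  exact (EuclideanSpace.equiv (Fin d) ℝ).toHomeomorph.isCompact_preimage.mpr
    (isCompact_univ_pi fun _ => isCompact_Icc)

theorem cube_average_approx_extend_general
    (d : ℕ)
    (α : Euc d → Euc d → Euc d)
    (hαcont : Continuous fun p : Euc d × Euc d => α p.1 p.2)
    (hcoc : ∀ x v w : Euc d, α x (v + w) = α x v + α (x + v) w)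
    (A : Euc d →ₗ[ℝ] Euc d)
    (ε r : ℝ) (hε : 0 < ε)
    (hsmall : ∀ x v : Euc d, ‖v‖ ≤ 2 →
      ‖(r ^ d)⁻¹ • (∫ s in cube d r, α (x + s) v) - A v‖ ≤ ε) :
    ∀ x v : Euc d,
      ‖(r ^ d)⁻¹ • (∫ s in cube d r, α (x + s) v) - A v‖ ≤ ε * max ‖v‖ 1 := by
  have hint : ∀ y v, IntegrableOn (fun s => α (y + s) v) (cube d r) := fun y v =>
    have hshift : Continuous fun s : Euc d => (y + s, v) := by fun_prop
    (hαcont.comp hshift).continuousOn.integrableOn_compact (isCompact_cube d r)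
  have herror : IsCocycle fun x v => (r ^ d)⁻¹ • (∫ s in cube d r, α (x + s) v) - A v :=
    ((IsCocycle.setIntegral_add_left hcoc hint).const_smul _).sub_map A
  intro x v
  calc ‖(r ^ d)⁻¹ • (∫ s in cube d r, α (x + s) v) - A v‖ ≤ ⌈‖v‖ / 2⌉₊ * ε :=
        herror.norm_le_ceil_mul two_pos hsmall x v
    _ ≤ ε * max ‖v‖ 1 := by
      rw [mul_comm]
      gcongr
      exact Nat.ceil_half_le_max_one (norm_nonneg v)

/-- If the cube averages of a continuous cocycle are uniformly `ε`-close to a linear map `A`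
for all vectors of norm at most `2`, then they are `ε·max(‖v‖,1)`-close for all vectors. -/
theorem cube_average_approx_extend
    (d : ℕ) (hd : 1 ≤ d)
    (α : Euc d → Euc d → Euc d)
    (hαcont : Continuous fun p : Euc d × Euc d => α p.1 p.2)
    (hcoc : ∀ x v w : Euc d, α x (v + w) = α x v + α (x + v) w)
    (A : Euc d →ₗ[ℝ] Euc d)
    (ε r : ℝ) (hε : 0 < ε) (hr : 0 < r)
    (hsmall : ∀ x v : Euc d, ‖v‖ ≤ 2 →
      ‖(r ^ d)⁻¹ • (∫ s in cube d r, α (x + s) v) - A v‖ ≤ ε) :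
    ∀ x v : Euc d,
      ‖(r ^ d)⁻¹ • (∫ s in cube d r, α (x + s) v) - A v‖ ≤ ε * max ‖v‖ 1 :=
  cube_average_approx_extend_general d α hαcont hcoc A ε r hε hsmall
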